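/- Every MRS-game is balanced: the core Core(N,M,v) = {x ∈ ℝ^{N∪M} : Σ_{i∈N∪M} x_i = v(N,M) and Σ_{i∈R∪S} x_i ≥ v(R,S) for all R ⊆ N, S ⊆ M} is nonempty. -/
import Mathlib


open Finset

section MRSDefs

variable {N M : Type*}

/-- Total order of retailer `i` to all suppliers. -/
noncomputable def qiM [Fintype M] (q : N → M → ℝ) (i : N) : ℝ := ∑ j, q i j

/-- Total order of retailer coalition `R` to supplier `j`. -/
noncomputable def qRj (R : Finset N) (q : N → M → ℝ) (j : M) : ℝ := ∑ i ∈ R, q i j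

/-- Total order of retailer coalition `R` to supplier coalition `S`. -/
noncomputable def qRS (R : Finset N) (S : Finset M) (q : N → M → ℝ) : ℝ :=
  ∑ j ∈ S, ∑ i ∈ R, q i j

/-- Joint production cost of supplier coalition `S`: the minimum of the members' costs. -/
noncomputable def cmin (c : M → ℝ → ℝ) (S : Finset M) (x : ℝ) : ℝ :=
  if h : S.Nonempty then S.inf' h (fun j => c j x) else 0

/-- Profit of retailer `i`, within retailer coalition `R` cooperating with
supplier coalition `S`, at order vector `q`:
`Π_i(q_i, Ψ^S(q_R)) = p_i(q_iM) q_iM - ∑_{j∈S} c_S(q_RS) q_ij - ∑_{j∈M∖S} w_j(q_Rj) q_ij`. -/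
noncomputable def retProfit [Fintype M] [DecidableEq M] (p : N → ℝ → ℝ) (w c : M → ℝ → ℝ)
    (R : Finset N) (S : Finset M) (q : N → M → ℝ) (i : N) : ℝ :=
  p i (qiM q i) * qiM q i
    - ∑ j ∈ S, cmin c S (qRS R S q) * q i j
    - ∑ j ∈ Sᶜ, w j (qRj R q j) * q i j

/-- Feasible order vectors for retailer coalition `R` (bounded production). -/
def Feas [Fintype M] (qstar : N → ℝ) (qbar : N → M → ℝ) (R : Finset N)
    (q : N → M → ℝ) : Prop :=
  (∀ i j, 0 ≤ q i j) ∧ (∀ i ∈ R, qiM q i ≤ qstar i) ∧ (∀ i j, q i j ≤ qbar i j)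

/-- `q` is an optimal order vector for the coalition `(R,S)` (bounded production). -/
def IsOptimal [Fintype M] [DecidableEq M] (p : N → ℝ → ℝ) (w c : M → ℝ → ℝ)
    (qstar : N → ℝ) (qbar : N → M → ℝ) (R : Finset N) (S : Finset M)
    (q : N → M → ℝ) : Prop :=
  Feas qstar qbar R q ∧
    ∀ q', Feas qstar qbar R q' →
      ∑ i ∈ R, retProfit p w c R S q' i ≤ ∑ i ∈ R, retProfit p w c R S q i

/-- Feasible order vectors for retailer coalition `R` (unbounded production). -/
def FeasU [Fintype M] (qstar : N → ℝ) (R : Finset N) (q : N → M → ℝ) : Prop :=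
  (∀ i j, 0 ≤ q i j) ∧ (∀ i ∈ R, qiM q i ≤ qstar i)

/-- `q` is an optimal order vector for the coalition `(R,S)` (unbounded production). -/
def IsOptimalU [Fintype M] [DecidableEq M] (p : N → ℝ → ℝ) (w c : M → ℝ → ℝ)
    (qstar : N → ℝ) (R : Finset N) (S : Finset M) (q : N → M → ℝ) : Prop :=
  FeasU qstar R q ∧
    ∀ q', FeasU qstar R q' →
      ∑ i ∈ R, retProfit p w c R S q' i ≤ ∑ i ∈ R, retProfit p w c R S q i

/-- Standing assumptions of an MRS-situation on prices and costs. -/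
structure MRSAssumptions (p : N → ℝ → ℝ) (w c : M → ℝ → ℝ) : Prop where
  c_pos : ∀ j x, 0 ≤ x → 0 < c j x
  c_strictAnti : ∀ j, StrictAntiOn (c j) (Set.Ici 0)
  c_cont : ∀ j, ContinuousOn (c j) (Set.Ici 0)
  w_pos : ∀ j x, 0 ≤ x → 0 < w j x
  w_anti : ∀ j, AntitoneOn (w j) (Set.Ici 0)
  w_cont : ∀ j, ContinuousOn (w j) (Set.Ici 0)
  w_gt_c : ∀ j x, 0 ≤ x → c j x < w j x
  p_anti : ∀ i, AntitoneOn (p i) (Set.Ici 0)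
  p_cont : ∀ i, ContinuousOn (p i) (Set.Ici 0)

/-- The altruistic payoff of retailer `i`: its individual profit at an optimal
grand-coalition solution `qNM`. -/
noncomputable def altruistic [Fintype N] [Fintype M] [DecidableEq M]
    (p : N → ℝ → ℝ) (w c : M → ℝ → ℝ) (qNM : N → M → ℝ) (i : N) : ℝ :=
  retProfit p w c Finset.univ Finset.univ qNM i

end MRSDefs


section AuxLemmas

variable {N M : Type*}

lemma cmin_anti [Fintype M] (c : M → ℝ → ℝ) (hc : ∀ j, StrictAntiOn (c j) (Set.Ici 0))
    (S : Finset M) {x y : ℝ} (hx : 0 ≤ x) (hxy : x ≤ y) :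
    cmin c S y ≤ cmin c S x := by
  unfold cmin
  by_cases h : S.Nonempty
  · rw [dif_pos h, dif_pos h]
    obtain ⟨j0, hj0, hj0e⟩ := S.exists_mem_eq_inf' h (fun j => c j x)
    rw [hj0e]
    exact le_trans (Finset.inf'_le _ hj0)
      ((hc j0).antitoneOn (Set.mem_Ici.mpr hx) (Set.mem_Ici.mpr (hx.trans hxy)) hxy)
  · rw [dif_neg h, dif_neg h]

lemma cmin_subset [Fintype M] (c : M → ℝ → ℝ) {S T : Finset M} (hS : S.Nonempty)
    (hST : S ⊆ T) (x : ℝ) : cmin c T x ≤ cmin c S x := by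
  have hT : T.Nonempty := hS.mono hST
  rw [cmin, cmin, dif_pos hS, dif_pos hT]
  obtain ⟨j0, hj0, he⟩ := S.exists_mem_eq_inf' hS (fun j => c j x)
  rw [he]
  exact Finset.inf'_le _ (hST hj0)

lemma cmin_le_apply [Fintype M] (c : M → ℝ → ℝ) {S : Finset M} {j : M} (hj : j ∈ S)
    (x : ℝ) : cmin c S x ≤ c j x := by
  rw [cmin, dif_pos ⟨j, hj⟩]
  exact Finset.inf'_le _ hj

lemma qRS_univ [Fintype M] (R : Finset N) (q : N → M → ℝ) :
    qRS R Finset.univ q = ∑ i ∈ R, qiM q i := by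
  unfold qRS qiM
  exact (Finset.sum_comm).symm

lemma bridge [Fintype M] [DecidableEq M] (p : N → ℝ → ℝ) (w c : M → ℝ → ℝ)
    (R : Finset N) (q : N → M → ℝ) :
    ∑ i ∈ R, retProfit p w c R Finset.univ q i
      = (∑ i ∈ R, p i (qiM q i) * qiM q i)
        - cmin c Finset.univ (qRS R Finset.univ q) * qRS R Finset.univ q := by
  have h1 : ∀ i, retProfit p w c R Finset.univ q i
      = p i (qiM q i) * qiM q i
        - cmin c Finset.univ (qRS R Finset.univ q) * qiM q i := by
    intro i
    rw [retProfit, Finset.compl_univ, Finset.sum_empty, ← Finset.mul_sum]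
    show _ - _ - 0 = _
    rw [sub_zero]
    rfl
  calc ∑ i ∈ R, retProfit p w c R Finset.univ q i
      = ∑ i ∈ R, (p i (qiM q i) * qiM q i
          - cmin c Finset.univ (qRS R Finset.univ q) * qiM q i) :=
        Finset.sum_congr rfl (fun i _ => h1 i)
    _ = (∑ i ∈ R, p i (qiM q i) * qiM q i)
        - cmin c Finset.univ (qRS R Finset.univ q) * ∑ i ∈ R, qiM q i := by
        rw [Finset.sum_sub_distrib, Finset.mul_sum]
    _ = _ := by rw [← qRS_univ]

noncomputable def hFun (p : N → ℝ → ℝ) (m : N → ℝ) (i : N) (l : ℝ) : ℝ :=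
  sSup ((fun a => p i a * a - l * a) '' Set.Icc 0 (m i))

lemma hFun_isGreatest (p : N → ℝ → ℝ) (m : N → ℝ) (i : N)
    (hp : ContinuousOn (p i) (Set.Ici 0)) (hm : 0 ≤ m i) (l : ℝ) :
    IsGreatest ((fun a => p i a * a - l * a) '' Set.Icc 0 (m i)) (hFun p m i l) := by
  have hcont : ContinuousOn (fun a => p i a * a - l * a) (Set.Icc 0 (m i)) := by
    apply ContinuousOn.sub
    · exact (hp.mono Set.Icc_subset_Ici_self).mul continuousOn_id
    · exact continuousOn_const.mul continuousOn_id
  obtain ⟨a0, ha0, hmax⟩ :=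
    isCompact_Icc.exists_isMaxOn (Set.nonempty_Icc.mpr hm) hcont
  have hG : IsGreatest ((fun a => p i a * a - l * a) '' Set.Icc 0 (m i))
      ((fun a => p i a * a - l * a) a0) := by
    constructor
    · exact Set.mem_image_of_mem _ ha0
    · rintro _ ⟨x, hx, rfl⟩
      exact hmax hx
  rw [hFun, hG.csSup_eq]
  exact hG

lemma hFun_lipschitz (p : N → ℝ → ℝ) (m : N → ℝ) (i : N)
    (hp : ContinuousOn (p i) (Set.Ici 0)) (hm : 0 ≤ m i) :
    LipschitzWith (Real.toNNReal (m i)) (hFun p m i) := by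
  have key : ∀ l1 l2 : ℝ, hFun p m i l1 - hFun p m i l2 ≤ m i * |l1 - l2| := by
    intro l1 l2
    obtain ⟨a, ha, hae⟩ := (hFun_isGreatest p m i hp hm l1).1
    have h2 : p i a * a - l2 * a ≤ hFun p m i l2 :=
      (hFun_isGreatest p m i hp hm l2).2 (Set.mem_image_of_mem _ ha)
    have habs : (l2 - l1) * a ≤ m i * |l1 - l2| := by
      have h3 : l2 - l1 ≤ |l1 - l2| := by
        rw [abs_sub_comm]; exact le_abs_self _
      nlinarith [ha.1, ha.2, abs_nonneg (l1 - l2)]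
    have : hFun p m i l1 = p i a * a - l1 * a := hae.symm
    nlinarith
  apply LipschitzWith.of_dist_le_mul
  intro l1 l2
  rw [Real.dist_eq, Real.dist_eq, Real.coe_toNNReal _ hm, abs_sub_le_iff]
  constructor
  · exact key l1 l2
  · rw [abs_sub_comm]
    exact key l2 l1

end AuxLemmas

/-- Theorem: every MRS-game is balanced, i.e. its core is nonempty. -/
theorem stmt_9 {N M : Type*} [Fintype N] [Fintype M] [DecidableEq M]
    (p : N → ℝ → ℝ) (w c : M → ℝ → ℝ) (qstar : N → ℝ) (qbar : N → M → ℝ)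
    (hMRS : MRSAssumptions p w c)
    (v : Finset N → Finset M → ℝ)
    (hv : ∀ (R : Finset N) (S : Finset M), ∃ q,
      IsOptimal p w c qstar qbar R S q ∧ v R S = ∑ i ∈ R, retProfit p w c R S q i) :
    ∃ (xN : N → ℝ) (xM : M → ℝ),
      (∑ i, xN i) + (∑ j, xM j) = v Finset.univ Finset.univ ∧
      ∀ (R : Finset N) (S : Finset M),
        v R S ≤ (∑ i ∈ R, xN i) + ∑ j ∈ S, xM j := by
  classical
  obtain ⟨qN, hoptN, hVN⟩ := hv Finset.univ Finset.univ
  have hq0 : ∀ i j, 0 ≤ qN i j := hoptN.1.1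
  have hqbar0 : ∀ i j, 0 ≤ qbar i j := fun i j => (hq0 i j).trans (hoptN.1.2.2 i j)
  have hqiM0 : ∀ (q : N → M → ℝ), (∀ i j, 0 ≤ q i j) → ∀ i, 0 ≤ qiM q i :=
    fun q hq i => Finset.sum_nonneg fun j _ => hq i j
  have hqstar0 : ∀ i, 0 ≤ qstar i :=
    fun i => (hqiM0 qN hq0 i).trans (hoptN.1.2.1 i (Finset.mem_univ i))
  set m : N → ℝ := fun i => min (qstar i) (∑ j, qbar i j) with hmdef
  have hm : ∀ i, 0 ≤ m i :=
    fun i => le_min (hqstar0 i) (Finset.sum_nonneg fun j _ => hqbar0 i j)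
  -- within-bounds membership for any feasible q
  have hmemm : ∀ (q : N → M → ℝ) (R : Finset N), Feas qstar qbar R q →
      ∀ i ∈ R, qiM q i ∈ Set.Icc 0 (m i) := by
    intro q R hf i hi
    exact ⟨hqiM0 q hf.1 i,
      le_min (hf.2.1 i hi) (Finset.sum_le_sum fun j _ => hf.2.2 i j)⟩
  -- construction of a feasible matrix with prescribed row totals
  have hconstruct : ∀ a : N → ℝ, (∀ i, a i ∈ Set.Icc 0 (m i)) →
      ∃ q : N → M → ℝ, (∀ R, Feas qstar qbar R q) ∧ (∀ i, qiM q i = a i) := by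
    intro a ha
    have hrow : ∀ i, ∃ r : M → ℝ,
        (∀ j, 0 ≤ r j) ∧ (∀ j, r j ≤ qbar i j) ∧ ∑ j, r j = a i := by
      intro i
      have haT : a i ≤ ∑ j, qbar i j := (ha i).2.trans (min_le_right _ _)
      by_cases hT : 0 < ∑ j, qbar i j
      · refine ⟨fun j => a i * qbar i j / (∑ j', qbar i j'), ?_, ?_, ?_⟩
        · intro j
          exact div_nonneg (mul_nonneg (ha i).1 (hqbar0 i j)) hT.le
        · intro j
          rw [div_le_iff₀ hT]
          nlinarith [hqbar0 i j, (ha i).1]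
        · rw [← Finset.sum_div, ← Finset.mul_sum, mul_div_assoc,
            div_self hT.ne', mul_one]
      · have hT0 : (∑ j, qbar i j) = 0 :=
          le_antisymm (not_lt.mp hT) (Finset.sum_nonneg fun j _ => hqbar0 i j)
        have ha0 : a i = 0 := le_antisymm (haT.trans_eq hT0) (ha i).1
        exact ⟨fun _ => 0, fun _ => le_rfl, fun j => hqbar0 i j,
          by rw [Finset.sum_const_zero, ha0]⟩
    choose r hr0 hrbar hrsum using hrow
    refine ⟨fun i => r i, fun R => ⟨fun i j => hr0 i j, fun i _ => ?_, fun i j => hrbar i j⟩,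
      fun i => hrsum i⟩
    rw [show qiM (fun i => r i) i = ∑ j, r i j from rfl, hrsum i]
    exact le_trans ((ha i).2) (min_le_left _ _)
  -- notation
  set g : N → ℝ → ℝ := fun i x => p i x * x with hgdef
  set φ : ℝ → ℝ := fun x => cmin c Finset.univ x with hphidef
  set V : ℝ := v Finset.univ Finset.univ with hVdef
  set A : ℝ := ∑ i, qiM qN i with hAdef
  have hA0 : 0 ≤ A := Finset.sum_nonneg fun i _ => hqiM0 qN hq0 i
  have hVform : V = (∑ i, g i (qiM qN i)) - φ A * A := by
    rw [hVN, bridge, qRS_univ]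
  -- the grand-coalition lower bound
  have hL4 : ∀ a : N → ℝ, (∀ i, a i ∈ Set.Icc 0 (m i)) →
      (∑ i, g i (a i)) - φ (∑ i, a i) * (∑ i, a i) ≤ V := by
    intro a ha
    obtain ⟨q, hfeas, hqiM⟩ := hconstruct a ha
    have hopt := hoptN.2 q (hfeas Finset.univ)
    have e1 : ∑ i, qiM q i = ∑ i, a i :=
      Finset.sum_congr rfl fun i _ => hqiM i
    have e2 : ∑ i ∈ Finset.univ, retProfit p w c Finset.univ Finset.univ q i
        = (∑ i, g i (a i)) - φ (∑ i, a i) * (∑ i, a i) := by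
      rw [bridge, qRS_univ, e1]
      congr 1
      exact Finset.sum_congr rfl fun i _ => by rw [hqiM i]
    rw [← e2]
    calc ∑ i ∈ Finset.univ, retProfit p w c Finset.univ Finset.univ q i
        ≤ ∑ i ∈ Finset.univ, retProfit p w c Finset.univ Finset.univ qN i := hopt
      _ = V := hVN.symm
  have hV0 : 0 ≤ V := by
    have := hL4 (fun _ => 0) (fun i => ⟨le_rfl, hm i⟩)
    simpa [hgdef] using this
  -- the price-profit functions
  have hGr : ∀ i l, IsGreatest ((fun x => p i x * x - l * x) '' Set.Icc 0 (m i))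
      (hFun p m i l) := fun i l => hFun_isGreatest p m i (hMRS.p_cont i) (hm i) l
  have hle : ∀ i (l : ℝ), ∀ x ∈ Set.Icc 0 (m i), g i x - l * x ≤ hFun p m i l :=
    fun i l x hx => (hGr i l).2 (Set.mem_image_of_mem _ hx)
  have hex : ∀ i (l : ℝ), ∃ x ∈ Set.Icc 0 (m i), g i x - l * x = hFun p m i l := by
    intro i l
    obtain ⟨x, hx, hxe⟩ := (hGr i l).1
    exact ⟨x, hx, hxe⟩
  set H : ℝ → ℝ := fun l => ∑ i, hFun p m i l with hHdef
  have hHcont : Continuous H := by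
    apply continuous_finset_sum
    intro i _
    exact (hFun_lipschitz p m i (hMRS.p_cont i) (hm i)).continuous
  -- endpoints for the IVT
  set l0 : ℝ := φ A with hl0def
  have hH0 : V ≤ H l0 := by
    have hstep : ∀ i, g i (qiM qN i) - l0 * qiM qN i ≤ hFun p m i l0 :=
      fun i => hle i l0 _ (hmemm qN Finset.univ hoptN.1 i (Finset.mem_univ i))
    have : (∑ i, g i (qiM qN i)) - φ A * A
        = ∑ i, (g i (qiM qN i) - l0 * qiM qN i) := by
      rw [Finset.sum_sub_distrib, ← Finset.mul_sum, hl0def, hAdef]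
    rw [hVform, this]
    exact Finset.sum_le_sum fun i _ => hstep i
  set L : ℝ := l0 + ∑ i, max (p i 0 - l0) 0 with hLdef
  have hl0L : l0 ≤ L :=
    le_add_of_nonneg_right (Finset.sum_nonneg fun i _ => le_max_right _ _)
  have hLp : ∀ i, p i 0 ≤ L := by
    intro i
    have h1 : max (p i 0 - l0) 0 ≤ ∑ i, max (p i 0 - l0) 0 :=
      Finset.single_le_sum (f := fun i => max (p i 0 - l0) 0)
        (fun i _ => le_max_right _ _) (Finset.mem_univ i)
    have h2 : p i 0 - l0 ≤ max (p i 0 - l0) 0 := le_max_left _ _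
    rw [hLdef]; linarith
  have hHL : H L ≤ V := by
    have hneg : ∀ i ∈ Finset.univ, hFun p m i L ≤ 0 := by
      intro i _
      obtain ⟨x, hx, hxe⟩ := hex i L
      rw [← hxe]
      have hpx : p i x ≤ p i 0 :=
        hMRS.p_anti i (Set.mem_Ici.mpr le_rfl) (Set.mem_Ici.mpr hx.1) hx.1
      have := hLp i
      show p i x * x - L * x ≤ 0
      nlinarith [hx.1]
    exact le_trans (Finset.sum_nonpos hneg) hV0
  -- IVT
  have hsurj := intermediate_value_Icc' hl0L hHcont.continuousOn
  obtain ⟨l, hlmem, hlV⟩ := hsurj ⟨hHL, hH0⟩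
  -- the coalition inequalities
  have hRuniv : ∀ R : Finset N, v R Finset.univ ≤ ∑ i ∈ R, hFun p m i l := by
    intro R
    obtain ⟨qR, hoptR, hvR⟩ := hv R Finset.univ
    set b : N → ℝ := fun i => qiM qR i with hbdef
    set B : ℝ := ∑ i ∈ R, b i with hBdef
    have hb0 : ∀ i, 0 ≤ b i := hqiM0 qR hoptR.1.1
    have hbm : ∀ i ∈ R, b i ∈ Set.Icc 0 (m i) := fun i hi => hmemm qR R hoptR.1 i hi
    have hB0 : 0 ≤ B := Finset.sum_nonneg fun i _ => hb0 i
    have hvRe : v R Finset.univ = (∑ i ∈ R, g i (b i)) - φ B * B := by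
      rw [hvR, bridge, qRS_univ]
    rcases le_or_gt l (φ B) with hc1 | hc1
    · have hsplit : ∑ i ∈ R, (g i (b i) - l * b i)
          = (∑ i ∈ R, g i (b i)) - l * B := by
        rw [Finset.sum_sub_distrib, ← Finset.mul_sum]
      have hub : ∑ i ∈ R, (g i (b i) - l * b i) ≤ ∑ i ∈ R, hFun p m i l :=
        Finset.sum_le_sum fun i hi => hle i l _ (hbm i hi)
      have hmul : l * B ≤ φ B * B := mul_le_mul_of_nonneg_right hc1 hB0
      rw [hvRe]; linarith
    · choose ahat hahatm hahate using fun i => hex i l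
      set a : N → ℝ := fun i => if i ∈ R then b i else ahat i with hadef
      have ham : ∀ i, a i ∈ Set.Icc 0 (m i) := by
        intro i
        by_cases h : i ∈ R
        · simpa [hadef, h] using hbm i h
        · simpa [hadef, h] using hahatm i
      have h4 := hL4 a ham
      set E : ℝ := ∑ i ∈ Rᶜ, ahat i with hEdef
      have hE0 : 0 ≤ E := Finset.sum_nonneg fun i _ => (hahatm i).1
      have hsplitA : ∑ i, a i = B + E := by
        rw [← Finset.sum_add_sum_compl R a]
        congr 1
        · exact Finset.sum_congr rfl fun i hi => by simp [hadef, hi]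
        · exact Finset.sum_congr rfl fun i hi => by
            simp [hadef, Finset.mem_compl.mp hi]
      have hga : ∑ i, g i (a i)
          = (∑ i ∈ R, g i (b i)) + ∑ i ∈ Rᶜ, g i (ahat i) := by
        rw [← Finset.sum_add_sum_compl R (fun i => g i (a i))]
        congr 1
        · exact Finset.sum_congr rfl fun i hi => by simp [hadef, hi]
        · exact Finset.sum_congr rfl fun i hi => by
            simp [hadef, Finset.mem_compl.mp hi]
      have hHsplit : H l = (∑ i ∈ R, hFun p m i l)
          + ((∑ i ∈ Rᶜ, g i (ahat i)) - l * E) := by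
        show (∑ i, hFun p m i l) = _
        rw [← Finset.sum_add_sum_compl R (fun i => hFun p m i l)]
        congr 1
        calc ∑ i ∈ Rᶜ, hFun p m i l
            = ∑ i ∈ Rᶜ, (g i (ahat i) - l * ahat i) :=
              Finset.sum_congr rfl fun i _ => (hahate i).symm
          _ = (∑ i ∈ Rᶜ, g i (ahat i)) - l * E := by
              rw [Finset.sum_sub_distrib, ← Finset.mul_sum]
      have hcost : φ (B + E) * (B + E) ≤ φ B * B + l * E := by
        have h1 : φ (B + E) ≤ φ B :=
          cmin_anti c hMRS.c_strictAnti Finset.univ hB0 (le_add_of_nonneg_right hE0)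
        nlinarith [hB0, hE0, hc1.le]
      rw [hsplitA, hga] at h4
      rw [← hlV, hHsplit] at h4
      rw [hvRe]
      linarith
  -- monotonicity in the supplier coalition
  have hL1 : ∀ (R : Finset N) (S : Finset M), v R S ≤ v R Finset.univ := by
    intro R S
    obtain ⟨q', hopt', hv'⟩ := hv R S
    obtain ⟨qR, hoptR, hvR⟩ := hv R Finset.univ
    have hq'0 : ∀ i j, 0 ≤ q' i j := hopt'.1.1
    have hQS0 : 0 ≤ qRS R S q' :=
      Finset.sum_nonneg fun j _ => Finset.sum_nonneg fun i _ => hq'0 i j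
    have hQSu : qRS R S q' ≤ qRS R Finset.univ q' := by
      apply Finset.sum_le_sum_of_subset_of_nonneg (Finset.subset_univ S)
      intro j _ _
      exact Finset.sum_nonneg fun i _ => hq'0 i j
    have hQu0 : 0 ≤ qRS R Finset.univ q' := hQS0.trans hQSu
    have hqRj0 : ∀ j, 0 ≤ qRj R q' j :=
      fun j => Finset.sum_nonneg fun i _ => hq'0 i j
    have hqRjle : ∀ j, qRj R q' j ≤ qRS R Finset.univ q' := by
      intro j
      exact Finset.single_le_sum (f := fun j => ∑ i ∈ R, q' i j)
        (fun j' _ => hqRj0 j') (Finset.mem_univ j)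
    have hstep : ∀ i ∈ R, retProfit p w c R S q' i
        ≤ retProfit p w c R Finset.univ q' i := by
      intro i _
      rw [retProfit, retProfit, Finset.compl_univ, Finset.sum_empty]
      have hcosts : ∑ j ∈ Finset.univ, cmin c Finset.univ (qRS R Finset.univ q') * q' i j
          ≤ (∑ j ∈ S, cmin c S (qRS R S q') * q' i j)
            + ∑ j ∈ Sᶜ, w j (qRj R q' j) * q' i j := by
        rw [← Finset.sum_add_sum_compl S
          (fun j => cmin c Finset.univ (qRS R Finset.univ q') * q' i j)]
        apply add_le_add
        · apply Finset.sum_le_sum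
          intro j hj
          apply mul_le_mul_of_nonneg_right _ (hq'0 i j)
          calc cmin c Finset.univ (qRS R Finset.univ q')
              ≤ cmin c Finset.univ (qRS R S q') :=
                cmin_anti c hMRS.c_strictAnti Finset.univ hQS0 hQSu
            _ ≤ cmin c S (qRS R S q') :=
                cmin_subset c ⟨j, hj⟩ (Finset.subset_univ S) _
        · apply Finset.sum_le_sum
          intro j _
          apply mul_le_mul_of_nonneg_right _ (hq'0 i j)
          calc cmin c Finset.univ (qRS R Finset.univ q')
              ≤ c j (qRS R Finset.univ q') := cmin_le_apply c (Finset.mem_univ j) _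
            _ ≤ c j (qRj R q' j) :=
                (hMRS.c_strictAnti j).antitoneOn (Set.mem_Ici.mpr (hqRj0 j))
                  (Set.mem_Ici.mpr hQu0) (hqRjle j)
            _ ≤ w j (qRj R q' j) := (hMRS.w_gt_c j _ (hqRj0 j)).le
      linarith
    calc v R S = ∑ i ∈ R, retProfit p w c R S q' i := hv'
      _ ≤ ∑ i ∈ R, retProfit p w c R Finset.univ q' i :=
          Finset.sum_le_sum hstep
      _ ≤ ∑ i ∈ R, retProfit p w c R Finset.univ qR i := hoptR.2 q' hopt'.1
      _ = v R Finset.univ := hvR.symm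
  -- conclusion
  refine ⟨fun i => hFun p m i l, fun _ => 0, ?_, ?_⟩
  · rw [Finset.sum_const_zero, add_zero]
    exact hlV
  · intro R S
    rw [Finset.sum_const_zero, add_zero]
    exact (hL1 R S).trans (hRuniv R)
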